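/- arXiv:2310.19171 — 4 statements merged into one kernel-verified Lean document; each statement's English description precedes it below -/
import Mathlib

section
/- Let b, κ, m, ψ, f, Σ̄ be real numbers with 0 ≤ κ < 1, κ < b, 0 ≤ ψ, 0 ≤ f ≤ 1, Σ̄ > 0, m ≤ 1. If (1-κ)Σ̄ = (b-κ)(ψ+f) and (b-κ)mf > (1-m)κΣ̄ + (1-m)(b-κ)ψ + b(1-κ), then m > κ and m > 3/4. -/
theorem stmt_1 (b κ m ψ f Sbar : ℝ)
    (hκ0 : 0 ≤ κ) (hκ1 : κ < 1) (hκb : κ < b)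
    (hψ : 0 ≤ ψ) (hf0 : 0 ≤ f) (hf1 : f ≤ 1) (hS : Sbar > 0) (hm : m ≤ 1)
    (heq : (1 - κ) * Sbar = (b - κ) * (ψ + f))
    (hineq : (b - κ) * m * f > (1 - m) * κ * Sbar + (1 - m) * (b - κ) * ψ + b * (1 - κ)) :
    m > κ ∧ m > 3 / 4 := by
  have hB : 0 < b - κ := by linarith
  have h1κ : 0 < 1 - κ := by linarith
  have hb : 0 < b := by linarith
  have hmf : 0 < m * f := by
    have h2 : 0 < (b - κ) * (m * f) := by
      nlinarith [mul_nonneg (mul_nonneg (by linarith : (0:ℝ) ≤ 1 - m) hκ0) hS.le,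
        mul_nonneg (mul_nonneg (by linarith : (0:ℝ) ≤ 1 - m) hB.le) hψ, mul_pos hb h1κ]
    by_contra h
    push_neg at h
    nlinarith [mul_nonneg hB.le (neg_nonneg.mpr h)]
  have hf : 0 < f := by
    rcases hf0.eq_or_lt with h | h
    · nlinarith
    · exact h
  have h3 := mul_lt_mul_of_pos_right hineq h1κ
  have heq2 : (1 - m) * κ * Sbar * (1 - κ) = (1 - m) * κ * ((b - κ) * (ψ + f)) := by
    linear_combination (1 - m) * κ * heq
  have key : (b - κ) * m * f * (1 - κ) >
      (1 - m) * κ * ((b - κ) * (ψ + f)) + (1 - m) * (b - κ) * ψ * (1 - κ)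
        + b * (1 - κ) * (1 - κ) := by
    nlinarith [h3, heq2]
  have h6 : 0 ≤ (1 - m) * κ * ((b - κ) * ψ) :=
    mul_nonneg (mul_nonneg (by linarith) hκ0) (mul_nonneg hB.le hψ)
  have h7 : 0 ≤ (1 - m) * (b - κ) * ψ * (1 - κ) :=
    mul_nonneg (mul_nonneg (mul_nonneg (by linarith) hB.le) hψ) h1κ.le
  have h4 : 0 ≤ (b - (b - κ) * f) * (1 - κ) ^ 2 := by
    apply mul_nonneg _ (sq_nonneg _)
    nlinarith
  have h5 : 0 ≤ (b - κ) * f * (2 * κ - 1) ^ 2 :=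
    mul_nonneg (mul_pos hB hf).le (sq_nonneg _)
  constructor
  · nlinarith [key, mul_pos hB hf, mul_pos (mul_pos hB hf) (mul_pos h1κ h1κ)]
  · nlinarith [key, mul_pos hB hf]
end

section
/- Let σ, b, m, f, ψ, ω be real numbers with 0 ≤ σ ≤ 1, b > 1, 0 ≤ m < 1, 0 ≤ f ≤ 1, ψ ≥ 0, ω ≥ 0. Set ẑ = (b-1)/(1-m). Then G(ẑ) := (1-m)σẑ² + [(1-σb) + (1-m)σ(ψ+ω+1) + (1-m)(1-σ)ψ - (1-σ)mf]ẑ + (1-σb)(ψ+ω+1) - (1-σ)b(ψ+f) ≥ 0. -/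
theorem stmt_2 (σ b m f ψ ω : ℝ)
    (hσ0 : 0 ≤ σ) (hσ1 : σ ≤ 1) (hb : b > 1) (hm0 : 0 ≤ m) (hm1 : m < 1)
    (hf0 : 0 ≤ f) (hf1 : f ≤ 1) (hψ : ψ ≥ 0) (hω : ω ≥ 0) :
    (1 - m) * σ * ((b - 1) / (1 - m)) ^ 2
      + ((1 - σ * b) + (1 - m) * σ * (ψ + ω + 1) + (1 - m) * (1 - σ) * ψ - (1 - σ) * m * f)
        * ((b - 1) / (1 - m))
      + ((1 - σ * b) * (ψ + ω + 1) - (1 - σ) * b * (ψ + f)) ≥ 0 := by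
  have hd : (0:ℝ) < 1 - m := by linarith
  have key : (1 - m) * ((1 - m) * σ * ((b - 1) / (1 - m)) ^ 2
      + ((1 - σ * b) + (1 - m) * σ * (ψ + ω + 1) + (1 - m) * (1 - σ) * ψ - (1 - σ) * m * f)
        * ((b - 1) / (1 - m))
      + ((1 - σ * b) * (ψ + ω + 1) - (1 - σ) * b * (ψ + f)))
      = (1 - σ) * ((1 - m) * ω + (1 - f) * (b - m)) := by
    field_simp
    ring
  have h2 : 0 ≤ (1 - σ) * ((1 - m) * ω + (1 - f) * (b - m)) := by
    apply mul_nonneg (by linarith)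
    have : (0:ℝ) ≤ (1 - f) * (b - m) := mul_nonneg (by linarith) (by linarith)
    nlinarith [mul_nonneg hd.le hω]
  have h3 : 0 ≤ (1 - m) * ((1 - m) * σ * ((b - 1) / (1 - m)) ^ 2
      + ((1 - σ * b) + (1 - m) * σ * (ψ + ω + 1) + (1 - m) * (1 - σ) * ψ - (1 - σ) * m * f)
        * ((b - 1) / (1 - m))
      + ((1 - σ * b) * (ψ + ω + 1) - (1 - σ) * b * (ψ + f))) := key ▸ h2
  exact (mul_nonneg_iff_of_pos_left hd).mp h3
end

section
/- Let b > 1, 0 ≤ κ < 1 with κ = σb, h = b - κ, 0 ≤ m ≤ 3/4, m > κ, y ≥ 0 with y ≤ 1/(1-m) ≤ 4, u ≥ 0, z = by, bhu ≥ 1 - κ, hu ≥ 1-κ. Then C₃ := bhu - (m-κ)(1 + my - huz) > 0. -/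
theorem stmt_10 (σ b κ h m y u z : ℝ)
    (hb : b > 1) (hκ0 : 0 ≤ κ) (hκ1 : κ < 1) (hκ : κ = σ * b) (hh : h = b - κ)
    (hm0 : 0 ≤ m) (hm1 : m ≤ 3 / 4) (hmκ : m > κ)
    (hy0 : y ≥ 0) (hy1 : y ≤ 1 / (1 - m)) (hy2 : 1 / (1 - m) ≤ 4)
    (hu : u ≥ 0) (hz : z = b * y)
    (hbhu : b * h * u ≥ 1 - κ) (hhu : h * u ≥ 1 - κ) :
    b * h * u - (m - κ) * (1 + m * y - h * u * z) > 0 := by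
  have hm4 : 1 - m > 0 := by linarith
  have hy4 : y ≤ 4 := le_trans hy1 hy2
  set B := b * h * u with hB
  have hrw : m * y - h * u * z = y * (m - B) := by rw [hz, hB]; ring
  have hBs : B > 1 - κ := by
    have : B ≥ b * (1 - κ) := by
      rw [hB, mul_assoc]
      exact mul_le_mul_of_nonneg_left hhu (by linarith)
    nlinarith
  have hrw2 : 1 + m * y - h * u * z = 1 + y * (m - B) := by linarith
  rw [hrw2]
  rcases le_or_gt m B with hc | hc
  · -- 1 + y(m-B) ≤ 1
    have h1 : (m - κ) * (1 + y * (m - B)) ≤ (m - κ) * 1 := by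
      have : y * (m - B) ≤ 0 := mul_nonpos_of_nonneg_of_nonpos hy0 (by linarith)
      apply mul_le_mul_of_nonneg_left (by linarith) (by linarith)
    nlinarith
  · have h1 : y * (m - B) ≤ 4 * (m - B) :=
      mul_le_mul_of_nonneg_right hy4 (by linarith)
    have h2 : 1 + y * (m - B) < 4 * κ := by nlinarith
    have h3 : (m - κ) * (1 + y * (m - B)) ≤ (3/4 - κ) * (4 * κ) := by
      rcases le_or_gt (1 + y * (m - B)) 0 with h4 | h4
      · nlinarith
      · nlinarith
    nlinarith [sq_nonneg (1 - 2 * κ)]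
end

section
/- Let h > 0, κ ∈ [0,1), ψ ≥ 0, Σ̄ ≥ 1, m ∈ (κ, 3/4], b > h, with the constraint (1-κ)Σ̄ ≤ hψ + h. Then B' := b(1-κ) + hψ - (m-κ)Σ̄ satisfies (1-κ)B' > h(1/2 - κ)² ≥ 0, hence B' > 0. -/
theorem stmt_12 (h κ ψ Sbar m b : ℝ)
    (hh : h > 0) (hκ0 : 0 ≤ κ) (hκ1 : κ < 1) (hψ : ψ ≥ 0) (hS : Sbar ≥ 1)
    (hmκ : κ < m) (hm : m ≤ 3 / 4) (hbh : b > h)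
    (hc : (1 - κ) * Sbar ≤ h * ψ + h) :
    (1 - κ) * (b * (1 - κ) + h * ψ - (m - κ) * Sbar) > h * (1 / 2 - κ) ^ 2 ∧
    h * (1 / 2 - κ) ^ 2 ≥ 0 ∧
    b * (1 - κ) + h * ψ - (m - κ) * Sbar > 0 := by
  have h1 : (1 - κ) * (b * (1 - κ) + h * ψ - (m - κ) * Sbar) > h * (1 / 2 - κ) ^ 2 := by
    nlinarith [mul_le_mul_of_nonneg_left hc (le_of_lt (sub_pos.mpr hmκ)),
      mul_pos (sub_pos.mpr hbh) (mul_pos (sub_pos.mpr hκ1) (sub_pos.mpr hκ1)),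
      mul_nonneg (mul_nonneg hh.le hψ) (sub_nonneg.mpr (hm.trans (by norm_num : (3:ℝ)/4 ≤ 1)))]
  have h2 : h * (1 / 2 - κ) ^ 2 ≥ 0 := mul_nonneg hh.le (sq_nonneg _)
  refine ⟨h1, h2, ?_⟩
  have := h1.trans_le' h2
  nlinarith [sub_pos.mpr hκ1]
end
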